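/- For all n ≥ 1 and real x, ∑_{k=0}^{n-1} C(n,k) ⟨1⟩_{n-k,λ} (-1)^k φ_{k,λ}(x) = ∑_{k=0}^{n} C(n,k) ⟨1⟩_{n-k,λ} (-1)^{k-1} φ'_{k,λ}(x). -/

import Mathlib

open Finset

/-- Generalized falling factorial `(x)_{n,lam} = x(x-lam)...(x-(n-1)lam)`. -/
noncomputable def dfall (lam x : ℝ) (n : ℕ) : ℝ := ∏ i ∈ Finset.range n, (x - i * lam)

/-- Generalized rising factorial `⟨x⟩_{n,lam} = x(x+lam)...(x+(n-1)lam)`. -/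
noncomputable def drise (lam x : ℝ) (n : ℕ) : ℝ := ∏ i ∈ Finset.range n, (x + i * lam)



lemma dfall_zero (lam x : ℝ) : dfall lam x 0 = 1 := by simp [dfall]

lemma dfall_succ (lam x : ℝ) (n : ℕ) :
    dfall lam x (n + 1) = dfall lam x n * (x - n * lam) := by
  simp [dfall, Finset.prod_range_succ]

lemma drise_one_succ (lam : ℝ) (m : ℕ) :
    drise lam 1 (m + 1) = drise lam 1 m * (1 + m * lam) := by
  simp [drise, Finset.prod_range_succ]

lemma dfall_one_eq_zero {j k : ℕ} (h : j < k) : dfall 1 (j : ℝ) k = 0 := by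
  apply Finset.prod_eq_zero (Finset.mem_range.mpr h)
  simp

lemma dfall_one_self_ne_zero (k : ℕ) : dfall 1 (k : ℝ) k ≠ 0 := by
  apply ne_of_gt
  apply Finset.prod_pos
  intro i hi
  rw [Finset.mem_range] at hi
  have : (i : ℝ) < k := by exact_mod_cast hi
  linarith

lemma uniq (m : ℕ) (c : ℕ → ℝ)
    (h : ∀ x : ℝ, ∑ k ∈ range (m + 1), c k * dfall 1 x k = 0) :
    ∀ k, k ≤ m → c k = 0 := by
  intro k
  induction k using Nat.strong_induction_on with
  | _ k ih =>
    intro hk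
    have h0 := h (k : ℝ)
    rw [Finset.sum_eq_single k] at h0
    · exact (mul_eq_zero.mp h0).resolve_right (dfall_one_self_ne_zero k)
    · intro b hb hbk
      rcases lt_or_gt_of_ne hbk with hlt | hgt
      · rw [ih b hlt (le_of_lt (lt_of_lt_of_le hlt hk))]; ring
      · rw [dfall_one_eq_zero hgt]; ring
    · intro hkk
      exact absurd (Finset.mem_range.mpr (Nat.lt_succ_of_le hk)) hkk

noncomputable def Sz (S : ℕ → ℕ → ℝ) (n k : ℕ) : ℝ := if k ≤ n then S n k else 0

lemma Sz_of_gt {S : ℕ → ℕ → ℝ} {n k : ℕ} (h : n < k) : Sz S n k = 0 := by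
  simp [Sz, Nat.not_le.mpr h]

section
variable (lam : ℝ) (S : ℕ → ℕ → ℝ)
  (hS : ∀ (n : ℕ) (x : ℝ), dfall lam x n = ∑ k ∈ Finset.range (n + 1), S n k * dfall 1 x k)

include hS

lemma hSz : ∀ (n : ℕ) (x : ℝ),
    dfall lam x n = ∑ k ∈ range (n + 1), Sz S n k * dfall 1 x k := by
  intro n x
  rw [hS n x]
  apply Finset.sum_congr rfl
  intro k hk
  rw [Finset.mem_range] at hk
  simp [Sz, Nat.lt_succ_iff.mp hk]

lemma Sz_rec (n m : ℕ) :
    Sz S (n + 1) m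
      = (if m = 0 then 0 else Sz S n (m - 1)) + ((m : ℝ) - n * lam) * Sz S n m := by
  by_cases hm : m ≤ n + 1
  · have key : ∀ x : ℝ, ∑ k ∈ range (n + 2),
        (Sz S (n + 1) k -
          ((if k = 0 then 0 else Sz S n (k - 1)) + ((k : ℝ) - n * lam) * Sz S n k))
          * dfall 1 x k = 0 := by
      intro x
      have h1 : ∑ k ∈ range (n + 2), Sz S (n + 1) k * dfall 1 x k = dfall lam x (n + 1) :=
        (hSz lam S hS (n + 1) x).symm
      have h2 : ∑ k ∈ range (n + 2),
          ((if k = 0 then 0 else Sz S n (k - 1)) + ((k : ℝ) - n * lam) * Sz S n k)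
            * dfall 1 x k = dfall lam x (n + 1) := by
        have e1 : ∑ k ∈ range (n + 2),
            ((if k = 0 then 0 else Sz S n (k - 1)) + ((k : ℝ) - n * lam) * Sz S n k)
              * dfall 1 x k
            = ∑ k ∈ range (n + 2), (if k = 0 then 0 else Sz S n (k - 1)) * dfall 1 x k
              + ∑ k ∈ range (n + 2), ((k : ℝ) - n * lam) * Sz S n k * dfall 1 x k := by
          rw [← Finset.sum_add_distrib]
          apply Finset.sum_congr rfl
          intro k _; ring
        rw [e1]
        have e2 : ∑ k ∈ range (n + 2), (if k = 0 then 0 else Sz S n (k - 1)) * dfall 1 x k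
            = ∑ k ∈ range (n + 1), Sz S n k * dfall 1 x (k + 1) := by
          rw [Finset.sum_range_succ']
          simp
        have e3 : ∑ k ∈ range (n + 2), ((k : ℝ) - n * lam) * Sz S n k * dfall 1 x k
            = ∑ k ∈ range (n + 1), ((k : ℝ) - n * lam) * Sz S n k * dfall 1 x k := by
          rw [Finset.sum_range_succ]
          rw [Sz_of_gt (Nat.lt_succ_self n)]
          ring
        rw [e2, e3, ← Finset.sum_add_distrib]
        have e4 : ∀ k ∈ range (n + 1),
            Sz S n k * dfall 1 x (k + 1) + ((k : ℝ) - n * lam) * Sz S n k * dfall 1 x k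
              = (Sz S n k * dfall 1 x k) * (x - n * lam) := by
          intro k _
          rw [dfall_succ]
          push_cast
          ring
        rw [Finset.sum_congr rfl e4, ← Finset.sum_mul, ← hSz lam S hS n x, ← dfall_succ]
      rw [show (fun k => (Sz S (n + 1) k -
          ((if k = 0 then 0 else Sz S n (k - 1)) + ((k : ℝ) - n * lam) * Sz S n k))
          * dfall 1 x k) = fun k => Sz S (n + 1) k * dfall 1 x k -
          ((if k = 0 then 0 else Sz S n (k - 1)) + ((k : ℝ) - n * lam) * Sz S n k)
          * dfall 1 x k from by funext k; ring]
      rw [Finset.sum_sub_distrib, h1, h2, sub_self]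
    have h0 := uniq (n + 1) _ key m hm
    have := sub_eq_zero.mp h0
    linarith [this]
  · push_neg at hm
    rw [Sz_of_gt hm, Sz_of_gt (by omega : n < m)]
    have hm0 : m ≠ 0 := by omega
    rw [if_neg hm0, Sz_of_gt (by omega : n < m - 1)]
    ring
end

noncomputable def Tf (S : ℕ → ℕ → ℝ) (k j : ℕ) : ℝ := Sz S k j + ((j : ℝ) + 1) * Sz S k (j + 1)

lemma Tf_of_gt {S : ℕ → ℕ → ℝ} {k j : ℕ} (h : k < j) : Tf S k j = 0 := by
  rw [Tf, Sz_of_gt h, Sz_of_gt (by omega : k < j + 1)]; ring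

section
variable (lam : ℝ) (S : ℕ → ℕ → ℝ)
  (hS : ∀ (n : ℕ) (x : ℝ), dfall lam x n = ∑ k ∈ Finset.range (n + 1), S n k * dfall 1 x k)
include hS

lemma Tf_rec (k j : ℕ) :
    Tf S (k + 1) j
      = (if j = 0 then 0 else Tf S k (j - 1)) + (((j : ℝ) + 1) - k * lam) * Tf S k j := by
  rw [Tf, Sz_rec lam S hS k j, Sz_rec lam S hS k (j + 1)]
  cases j with
  | zero => simp [Tf]; ring
  | succ m =>
    rw [if_neg (by omega : m + 1 ≠ 0), if_neg (by omega : m + 1 + 1 ≠ 0)]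
    simp only [Nat.add_sub_cancel, Tf]
    push_cast
    ring

lemma key : ∀ n j, ∑ k ∈ range (n + 1),
      (n.choose k : ℝ) * drise lam 1 (n - k) * (-1 : ℝ) ^ k * Tf S k j
    = (-1 : ℝ) ^ n * Sz S n j := by
  intro n
  induction n with
  | zero =>
    intro j
    have h0 : Sz S 0 (j + 1) = 0 := Sz_of_gt (by omega)
    simp [drise, Tf, h0]
  | succ n ih =>
    intro j
    set a : ℕ → ℝ := fun k => drise lam 1 (n + 1 - k) * (-1 : ℝ) ^ k * Tf S k j with ha
    have step1 : ∑ k ∈ range (n + 2), ((n + 1).choose k : ℝ) * a k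
        = ∑ k ∈ range (n + 1), (n.choose k : ℝ) * (a k + a (k + 1)) := by
      rw [Finset.sum_range_succ']
      have e1 : ∀ k ∈ range (n + 1), (((n + 1).choose (k + 1) : ℝ)) * a (k + 1)
          = (n.choose k : ℝ) * a (k + 1) + (n.choose (k + 1) : ℝ) * a (k + 1) := by
        intro k _
        rw [Nat.choose_succ_succ]
        push_cast
        ring
      rw [Finset.sum_congr rfl e1, Finset.sum_add_distrib]
      have e2 : ∑ k ∈ range (n + 1), (n.choose (k + 1) : ℝ) * a (k + 1)
          = ∑ k ∈ range (n + 1), (n.choose k : ℝ) * a k - (n.choose 0 : ℝ) * a 0 := by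
        have := Finset.sum_range_succ' (fun k => (n.choose k : ℝ) * a k) (n + 1)
        have e3 : ∑ k ∈ range (n + 2), (n.choose k : ℝ) * a k
            = ∑ k ∈ range (n + 1), (n.choose k : ℝ) * a k := by
          rw [Finset.sum_range_succ, Nat.choose_succ_self]
          simp
        rw [e3] at this
        linarith [this]
      rw [e2]
      have e5 : ∑ k ∈ range (n + 1), (n.choose k : ℝ) * (a k + a (k + 1))
          = ∑ k ∈ range (n + 1), (n.choose k : ℝ) * a k
            + ∑ k ∈ range (n + 1), (n.choose k : ℝ) * a (k + 1) := by
        rw [← Finset.sum_add_distrib]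
        apply Finset.sum_congr rfl
        intro k _; ring
      rw [e5]
      simp only [Nat.choose_zero_right, Nat.cast_one, one_mul]
      ring
    have step2 : ∀ k ∈ range (n + 1), (n.choose k : ℝ) * (a k + a (k + 1))
        = (n.choose k : ℝ) * ((↑n * lam - (j : ℝ)) * (drise lam 1 (n - k) * (-1 : ℝ) ^ k * Tf S k j)
          - drise lam 1 (n - k) * (-1 : ℝ) ^ k *
              (if j = 0 then 0 else Tf S k (j - 1))) := by
      intro k hk
      rw [Finset.mem_range] at hk
      have hnk : n + 1 - k = (n - k) + 1 := by omega
      have hnk2 : n + 1 - (k + 1) = n - k := by omega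
      have hcast : ((n - k : ℕ) : ℝ) = (n : ℝ) - (k : ℝ) := by
        have : (k : ℝ) ≤ (n : ℝ) := by exact_mod_cast Nat.le_of_lt_succ hk
        push_cast [Nat.cast_sub (Nat.le_of_lt_succ hk)]
        ring
      rw [ha]
      simp only []
      rw [hnk, hnk2, drise_one_succ, Tf_rec lam S hS k j, hcast, pow_succ]
      ring
    have e0 : ∀ k ∈ range (n + 1 + 1),
        ((n + 1).choose k : ℝ) * drise lam 1 (n + 1 - k) * (-1 : ℝ) ^ k * Tf S k j
          = ((n + 1).choose k : ℝ) * a k := by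
      intro k _; rw [ha]; ring
    rw [Finset.sum_congr rfl e0, step1, Finset.sum_congr rfl step2]
    rw [show (fun k => (↑(n.choose k) : ℝ) *
        ((↑n * lam - (j:ℝ)) * (drise lam 1 (n - k) * (-1 : ℝ) ^ k * Tf S k j)
          - drise lam 1 (n - k) * (-1 : ℝ) ^ k * (if j = 0 then 0 else Tf S k (j - 1))))
        = fun k => (↑n * lam - (j:ℝ)) * ((n.choose k : ℝ) * drise lam 1 (n - k) * (-1 : ℝ) ^ k * Tf S k j)
          - ((n.choose k : ℝ) * drise lam 1 (n - k) * (-1 : ℝ) ^ k * (if j = 0 then 0 else Tf S k (j - 1)))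
        from by funext k; ring]
    rw [Finset.sum_sub_distrib, ← Finset.mul_sum, ih j]
    rw [Sz_rec lam S hS n j]
    cases j with
    | zero =>
      simp only [if_pos rfl]
      push_cast
      simp
      ring
    | succ m =>
      simp only [Nat.succ_ne_zero, if_false, ite_false, Nat.add_sub_cancel]
      rw [show (∑ k ∈ range (n + 1),
          (n.choose k : ℝ) * drise lam 1 (n - k) * (-1 : ℝ) ^ k * Tf S k m)
          = (-1 : ℝ) ^ n * Sz S n m from ih m]
      push_cast
      ring
end

theorem stmt14 (lam : ℝ) (S : ℕ → ℕ → ℝ)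
    (hS : ∀ (n : ℕ) (x : ℝ), dfall lam x n = ∑ k ∈ Finset.range (n + 1), S n k * dfall 1 x k)
    (phi : ℕ → ℝ → ℝ)
    (hphi : ∀ (n : ℕ) (x : ℝ), phi n x = ∑ k ∈ Finset.range (n + 1), S n k * x ^ k) (n : ℕ) (hn : 1 ≤ n) (x : ℝ) :
    ∑ k ∈ Finset.range n,
        (n.choose k : ℝ) * drise lam 1 (n - k) * (-1 : ℝ) ^ k * phi k x =
      ∑ k ∈ Finset.range (n + 1),
        (n.choose k : ℝ) * drise lam 1 (n - k) * (-1 : ℝ) ^ (k + 1) * deriv (phi k) x := by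
  -- phi in terms of Sz
  have hphiSz : ∀ k : ℕ, phi k = fun y : ℝ => ∑ j ∈ range (k + 1), Sz S k j * y ^ j := by
    intro k
    funext y
    rw [hphi k y]
    apply Finset.sum_congr rfl
    intro j hj
    rw [Finset.mem_range] at hj
    simp [Sz, Nat.lt_succ_iff.mp hj]
  -- derivative of phi
  have hderiv : ∀ (k : ℕ) (y : ℝ), deriv (phi k) y
      = ∑ j ∈ range (k + 1), ((j : ℝ) + 1) * Sz S k (j + 1) * y ^ j := by
    intro k y
    rw [hphiSz k]
    have hd : HasDerivAt (fun y : ℝ => ∑ j ∈ range (k + 1), Sz S k j * y ^ j)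
        (∑ j ∈ range (k + 1), Sz S k j * ((j : ℝ) * y ^ (j - 1))) y := by
      apply HasDerivAt.fun_sum
      intro j _
      exact (hasDerivAt_pow j y).const_mul (Sz S k j)
    rw [hd.deriv]
    rw [Finset.sum_range_succ']
    simp only [Nat.cast_zero, zero_mul, mul_zero, add_zero]
    rw [Finset.sum_range_succ (fun j => ((j : ℝ) + 1) * Sz S k (j + 1) * y ^ j)]
    rw [Sz_of_gt (Nat.lt_succ_self k)]
    have : ∀ j ∈ range k, Sz S k (j + 1) * (((j : ℕ) + 1 : ℕ) * y ^ (j + 1 - 1))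
        = ((j : ℝ) + 1) * Sz S k (j + 1) * y ^ j := by
      intro j _
      push_cast
      ring
    rw [Finset.sum_congr rfl this]
    ring
  -- phi + phi'
  have hsum : ∀ k, k ≤ n → phi k x + deriv (phi k) x
      = ∑ j ∈ range (n + 1), Tf S k j * x ^ j := by
    intro k hk
    rw [hderiv k x, hphiSz k]
    simp only []
    rw [← Finset.sum_add_distrib]
    have e1 : ∀ j ∈ range (k + 1), Sz S k j * x ^ j + ((j : ℝ) + 1) * Sz S k (j + 1) * x ^ j
        = Tf S k j * x ^ j := by
      intro j _; rw [Tf]; ring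
    rw [Finset.sum_congr rfl e1]
    apply Finset.sum_subset
    · exact Finset.range_subset_range.mpr (by omega)
    · intro j _ hj
      rw [Finset.mem_range, Nat.not_lt] at hj
      rw [Tf_of_gt (by omega : k < j)]
      ring
  -- main identity
  have main : ∑ k ∈ range (n + 1),
      (n.choose k : ℝ) * drise lam 1 (n - k) * (-1 : ℝ) ^ k * (phi k x + deriv (phi k) x)
      = (-1 : ℝ) ^ n * phi n x := by
    have e1 : ∀ k ∈ range (n + 1),
        (n.choose k : ℝ) * drise lam 1 (n - k) * (-1 : ℝ) ^ k * (phi k x + deriv (phi k) x)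
        = ∑ j ∈ range (n + 1),
            ((n.choose k : ℝ) * drise lam 1 (n - k) * (-1 : ℝ) ^ k * Tf S k j) * x ^ j := by
      intro k hk
      rw [Finset.mem_range] at hk
      rw [hsum k (Nat.lt_succ_iff.mp hk), Finset.mul_sum]
      apply Finset.sum_congr rfl
      intro j _; ring
    rw [Finset.sum_congr rfl e1, Finset.sum_comm]
    have e2 : ∀ j ∈ range (n + 1),
        ∑ k ∈ range (n + 1),
          ((n.choose k : ℝ) * drise lam 1 (n - k) * (-1 : ℝ) ^ k * Tf S k j) * x ^ j
        = ((-1 : ℝ) ^ n * Sz S n j) * x ^ j := by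
      intro j _
      rw [← Finset.sum_mul, key lam S hS n j]
    rw [Finset.sum_congr rfl e2, hphiSz n]
    simp only []
    rw [Finset.mul_sum]
    apply Finset.sum_congr rfl
    intro j _; ring
  -- peel the top term of main's LHS and split
  have split : ∑ k ∈ range (n + 1),
      (n.choose k : ℝ) * drise lam 1 (n - k) * (-1 : ℝ) ^ k * (phi k x + deriv (phi k) x)
      = ∑ k ∈ range n, (n.choose k : ℝ) * drise lam 1 (n - k) * (-1 : ℝ) ^ k * phi k x
        + (-1 : ℝ) ^ n * phi n x
        + ∑ k ∈ range (n + 1),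
            (n.choose k : ℝ) * drise lam 1 (n - k) * (-1 : ℝ) ^ k * deriv (phi k) x := by
    have e3 : ∀ k ∈ range (n + 1),
        (n.choose k : ℝ) * drise lam 1 (n - k) * (-1 : ℝ) ^ k * (phi k x + deriv (phi k) x)
        = (n.choose k : ℝ) * drise lam 1 (n - k) * (-1 : ℝ) ^ k * phi k x
          + (n.choose k : ℝ) * drise lam 1 (n - k) * (-1 : ℝ) ^ k * deriv (phi k) x := by
      intro k _; ring
    rw [Finset.sum_congr rfl e3, Finset.sum_add_distrib]
    rw [Finset.sum_range_succ
      (fun k => (n.choose k : ℝ) * drise lam 1 (n - k) * (-1 : ℝ) ^ k * phi k x)]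
    rw [Nat.sub_self, Nat.choose_self]
    simp [drise]
  have rhs : ∑ k ∈ range (n + 1),
      (n.choose k : ℝ) * drise lam 1 (n - k) * (-1 : ℝ) ^ (k + 1) * deriv (phi k) x
      = - ∑ k ∈ range (n + 1),
          (n.choose k : ℝ) * drise lam 1 (n - k) * (-1 : ℝ) ^ k * deriv (phi k) x := by
    rw [← Finset.sum_neg_distrib]
    apply Finset.sum_congr rfl
    intro k _
    rw [pow_succ]
    ring
  rw [rhs]
  rw [split] at main
  linarith [main]
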